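/- arXiv:1810.08961 — 8 statements merged into one kernel-verified Lean document; each statement's English description precedes it below -/
import Mathlib

section
/- There is no OMZD(3): no 3×3 real matrix with zero diagonal, all off-diagonal entries nonzero, and satisfying A·Aᵀ = cI for some positive real c. -/
open Matrix

/-- An `n × n` real matrix is an OMZD: `A * Aᵀ = c • I` for some `c > 0`,
zero diagonal, and all off-diagonal entries nonzero. -/
def IsOMZD {n : ℕ} (A : Matrix (Fin n) (Fin n) ℝ) : Prop :=
  (∃ c : ℝ, 0 < c ∧ A * Aᵀ = c • (1 : Matrix (Fin n) (Fin n) ℝ)) ∧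
  (∀ i, A i i = 0) ∧ (∀ i j, i ≠ j → A i j ≠ 0)

theorem no_OMZD_three : ¬ ∃ A : Matrix (Fin 3) (Fin 3) ℝ, IsOMZD A := by
  rintro ⟨A, ⟨c, hc, hA⟩, hdiag, hoff⟩
  have h := congrFun (congrFun hA 0) 1
  simp [Matrix.mul_apply, Fin.sum_univ_three, Matrix.one_apply, Matrix.transpose_apply,
    hdiag 0, hdiag 1, Matrix.smul_apply] at h
  exact h.elim (hoff 0 2 (by decide)) (hoff 1 2 (by decide))
end

section
/- For every natural number n with n ≠ 1 and n ≠ 3, there exists an OMZD(n): an n×n real matrix with zero diagonal, all off-diagonal entries nonzero, satisfying A·Aᵀ = cI for some positive real c. -/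
open Matrix

/-! ### Auxiliary lemmas on `vecMulVec` -/

lemma omzd_vmv_mul_vmv {m n p : Type*} [Fintype n] (u : m → ℝ) (v x : n → ℝ) (y : p → ℝ) :
    vecMulVec u v * vecMulVec x y = (v ⬝ᵥ x) • vecMulVec u y := by
  ext i j
  simp only [Matrix.mul_apply, vecMulVec_apply, Matrix.smul_apply, dotProduct, smul_eq_mul,
    Finset.sum_mul]
  exact Finset.sum_congr rfl fun k _ => by ring

lemma omzd_mul_vmv {m n p : Type*} [Fintype n] (A : Matrix m n ℝ) (u : n → ℝ) (v : p → ℝ) :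
    A * vecMulVec u v = vecMulVec (A *ᵥ u) v := by
  ext i j
  simp only [Matrix.mul_apply, vecMulVec_apply, mulVec, dotProduct, Finset.sum_mul]
  exact Finset.sum_congr rfl fun k _ => by ring

lemma omzd_vmv_mul {m n p : Type*} [Fintype n] (u : m → ℝ) (v : n → ℝ) (A : Matrix n p ℝ) :
    vecMulVec u v * A = vecMulVec u (v ᵥ* A) := by
  ext i j
  simp only [Matrix.mul_apply, vecMulVec_apply, vecMul, dotProduct, Finset.mul_sum]
  exact Finset.sum_congr rfl fun k _ => by ring

lemma omzd_transpose_vmv {m n : Type*} (u : m → ℝ) (v : n → ℝ) :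
    (vecMulVec u v)ᵀ = vecMulVec v u := by
  ext i j; simp [vecMulVec_apply, mul_comm]

lemma omzd_vmv_mulVec {m n : Type*} [Fintype n] (u : m → ℝ) (v x : n → ℝ) :
    vecMulVec u v *ᵥ x = (v ⬝ᵥ x) • u := by
  ext i
  simp only [mulVec, dotProduct, vecMulVec_apply, Pi.smul_apply, smul_eq_mul, Finset.sum_mul]
  exact Finset.sum_congr rfl fun k _ => by ring

lemma omzd_vecMul_vmv {m n : Type*} [Fintype m] (x u : m → ℝ) (v : n → ℝ) :
    x ᵥ* vecMulVec u v = (x ⬝ᵥ u) • v := by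
  ext j
  simp only [vecMul, dotProduct, vecMulVec_apply, Pi.smul_apply, smul_eq_mul, Finset.sum_mul]
  exact Finset.sum_congr rfl fun k _ => by ring

lemma omzd_smul_vmv {m n : Type*} (c : ℝ) (u : m → ℝ) (v : n → ℝ) :
    vecMulVec (c • u) v = c • vecMulVec u v := by
  ext i j; simp [vecMulVec_apply]; ring

lemma omzd_vmv_smul {m n : Type*} (c : ℝ) (u : m → ℝ) (v : n → ℝ) :
    vecMulVec u (c • v) = c • vecMulVec u v := by
  ext i j; simp [vecMulVec_apply]; ring

lemma omzd_vmv_zero_left {m n : Type*} (v : n → ℝ) :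
    vecMulVec (0 : m → ℝ) v = 0 := by
  ext i j; simp [vecMulVec_apply]

lemma omzd_vmv_zero_right {m n : Type*} (u : m → ℝ) :
    vecMulVec u (0 : n → ℝ) = 0 := by
  ext i j; simp [vecMulVec_apply]

/-- Normalized OMZD: orthogonal with zero diagonal, off-diagonal entries nonzero. -/
def NOMZD {n : ℕ} (A : Matrix (Fin n) (Fin n) ℝ) : Prop :=
  A * Aᵀ = 1 ∧ (∀ i, A i i = 0) ∧ (∀ i j, i ≠ j → A i j ≠ 0)

/-! ### The inductive step: from size `n+1` to size `n+3`. -/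

lemma omzd_step {n : ℕ} (A : Matrix (Fin (n+1)) (Fin (n+1)) ℝ) (hN : NOMZD A) :
    ∃ M : Matrix (Fin (n+3)) (Fin (n+3)) ℝ, NOMZD M := by
  obtain ⟨hA, hd, ho⟩ := hN
  set e : Fin (n+1) → ℝ := Pi.single 0 1 with he_def
  set q : Fin (n+1) → ℝ := fun i => A i 0 with hq_def
  set w : Fin (n+1) → ℝ := fun j => A 0 j with hw_def
  have hrow : ∀ i j, ∑ k, A i k * A j k = if i = j then 1 else 0 := by
    intro i j
    have h := congrFun (congrFun hA i) j
    simpa [Matrix.mul_apply, Matrix.one_apply] using h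
  have hw0 : w 0 = 0 := hd 0
  have hq0 : q 0 = 0 := hd 0
  have heval : ∀ x : Fin (n+1), e x = if x = 0 then 1 else 0 := by
    intro x; rw [he_def]; simp [Pi.single_apply]
  have hAe : A *ᵥ e = q := by
    ext i
    simp [mulVec, dotProduct, he_def, Pi.single_apply, mul_ite, hq_def]
  have hAw : A *ᵥ w = e := by
    ext i
    have h := hrow i 0
    simp only [mulVec, dotProduct, hw_def]
    rw [show (∑ k, A i k * A 0 k) = if i = 0 then 1 else 0 from h, heval]
  have heAT : e ᵥ* Aᵀ = q := by
    ext j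
    simp [vecMul, dotProduct, he_def, Pi.single_apply, ite_mul, hq_def]
  have hwAT : w ᵥ* Aᵀ = e := by
    ext j
    have h := hrow j 0
    simp only [vecMul, dotProduct, hw_def, transpose_apply]
    rw [show (∑ k, A 0 k * A j k) = ∑ k, A j k * A 0 k from
      Finset.sum_congr rfl fun k _ => mul_comm _ _, h, heval]
  have hee : e ⬝ᵥ e = 1 := by simp [dotProduct, he_def, Pi.single_apply]
  have hwe : w ⬝ᵥ e = 0 := by
    have h : w ⬝ᵥ e = w 0 := by
      simp [dotProduct, he_def, Pi.single_apply, mul_ite]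
    rw [h, hw0]
  have hew : e ⬝ᵥ w = 0 := by
    have h : e ⬝ᵥ w = w 0 := by
      simp [dotProduct, he_def, Pi.single_apply, ite_mul]
    rw [h, hw0]
  have hww : w ⬝ᵥ w = 1 := by
    have h := hrow 0 0
    simpa [dotProduct, hw_def] using h
  set p : Fin 2 → ℝ := ![12/25, 16/25] with hp_def
  set r : Fin 2 → ℝ := ![-16/25, 12/25] with hr_def
  set s : Fin 2 → ℝ := ![12/25, -16/25] with hs_def
  set t : Fin 2 → ℝ := ![16/25, 12/25] with ht_def
  set B : Matrix (Fin (n+1)) (Fin (n+1)) ℝ :=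
    A - (2/5 : ℝ) • vecMulVec e w - (2/5 : ℝ) • vecMulVec q e with hB_def
  set X : Matrix (Fin (n+1)) (Fin 2) ℝ := vecMulVec e p + vecMulVec q r with hX_def
  set Y : Matrix (Fin 2) (Fin (n+1)) ℝ := vecMulVec s e + vecMulVec t w with hY_def
  set D : Matrix (Fin 2) (Fin 2) ℝ := !![0, -(3/5 : ℝ); -(3/5 : ℝ), 0] with hD_def
  have hBt : Bᵀ = Aᵀ - (2/5 : ℝ) • vecMulVec w e - (2/5 : ℝ) • vecMulVec e q := by
    rw [hB_def]
    simp [transpose_sub, transpose_smul, omzd_transpose_vmv]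
  have eq1 : B * Bᵀ + X * Xᵀ = 1 := by
    have h1 : B * Bᵀ = 1 - (16/25 : ℝ) • vecMulVec e e - (16/25 : ℝ) • vecMulVec q q := by
      rw [hB_def, hBt]
      simp only [Matrix.sub_mul, Matrix.mul_sub, Matrix.smul_mul, Matrix.mul_smul,
        omzd_mul_vmv, omzd_vmv_mul, omzd_vmv_mul_vmv, omzd_vmv_mulVec, omzd_vecMul_vmv,
        omzd_smul_vmv, omzd_vmv_smul, hA, hAe, hAw, heAT, hwAT,
        hee, hwe, hew, hww, smul_smul, zero_smul, one_smul,
        omzd_vmv_zero_left, omzd_vmv_zero_right, smul_zero]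
      module
    have hpp : p ⬝ᵥ p = 16/25 := by
      rw [hp_def]; simp [dotProduct, Fin.sum_univ_two]; norm_num
    have hpr : p ⬝ᵥ r = 0 := by
      rw [hp_def, hr_def]; simp [dotProduct, Fin.sum_univ_two]; norm_num
    have hrp : r ⬝ᵥ p = 0 := by
      rw [hp_def, hr_def]; simp [dotProduct, Fin.sum_univ_two]; norm_num
    have hrr : r ⬝ᵥ r = 16/25 := by
      rw [hr_def]; simp [dotProduct, Fin.sum_univ_two]; norm_num
    have h2 : X * Xᵀ = (16/25 : ℝ) • vecMulVec e e + (16/25 : ℝ) • vecMulVec q q := by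
      rw [hX_def]
      simp only [transpose_add, omzd_transpose_vmv, Matrix.add_mul, Matrix.mul_add,
        omzd_vmv_mul_vmv, hpp, hpr, hrp, hrr, zero_smul, one_smul]
      module
    rw [h1, h2]
    module
  have hDt : Dᵀ = D := by
    rw [hD_def]; ext i j; fin_cases i <;> fin_cases j <;> simp
  have eq2 : B * Yᵀ + X * Dᵀ = 0 := by
    have h1 : B * Yᵀ = (3/5 : ℝ) • vecMulVec q s + (3/5 : ℝ) • vecMulVec e t := by
      rw [hB_def, hY_def]
      simp only [transpose_add, omzd_transpose_vmv, Matrix.sub_mul, Matrix.mul_add,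
        Matrix.smul_mul, omzd_mul_vmv, omzd_vmv_mul_vmv, omzd_vmv_mulVec, omzd_vecMul_vmv,
        omzd_smul_vmv, omzd_vmv_smul, hAe, hAw, hee, hwe, hew, hww, smul_smul,
        zero_smul, one_smul, omzd_vmv_zero_left, omzd_vmv_zero_right, smul_zero]
      module
    have hpD : p ᵥ* D = -((3/5 : ℝ) • t) := by
      ext k
      rw [hp_def, ht_def, hD_def]
      fin_cases k <;> simp [vecMul, dotProduct, Fin.sum_univ_two] <;> norm_num
    have hrD : r ᵥ* D = -((3/5 : ℝ) • s) := by
      ext k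
      rw [hr_def, hs_def, hD_def]
      fin_cases k <;> simp [vecMul, dotProduct, Fin.sum_univ_two] <;> norm_num
    have h2 : X * Dᵀ = -((3/5 : ℝ) • vecMulVec q s) - (3/5 : ℝ) • vecMulVec e t := by
      rw [hX_def, hDt]
      simp only [Matrix.add_mul, omzd_vmv_mul, hpD, hrD]
      ext i j
      simp only [Matrix.add_apply, Matrix.sub_apply, Matrix.neg_apply, Matrix.smul_apply,
        vecMulVec_apply, Pi.neg_apply, Pi.smul_apply, smul_eq_mul]
      ring
    rw [h1, h2]
    module
  have eq3 : Y * Bᵀ + D * Xᵀ = 0 := by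
    have h := congrArg Matrix.transpose eq2
    simpa [transpose_add, transpose_mul, transpose_zero, add_comm] using h
  have eq4 : Y * Yᵀ + D * Dᵀ = 1 := by
    have h1 : Y * Yᵀ = vecMulVec s s + vecMulVec t t := by
      rw [hY_def]
      simp only [transpose_add, omzd_transpose_vmv, Matrix.add_mul, Matrix.mul_add,
        omzd_vmv_mul_vmv, hee, hwe, hew, hww, zero_smul, one_smul]
      module
    rw [h1, hDt, hs_def, ht_def, hD_def]
    ext i j
    fin_cases i <;> fin_cases j <;>
      simp [Matrix.mul_apply, Fin.sum_univ_two, vecMulVec_apply, Matrix.one_apply] <;>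
      norm_num
  -- entry formulas
  have hBapp : ∀ x y, B x y = A x y - (2/5 : ℝ) * (e x * w y) - (2/5 : ℝ) * (q x * e y) := by
    intro x y; rw [hB_def]
    simp [vecMulVec_apply]
  have hXapp : ∀ x l, X x l = e x * p l + q x * r l := by
    intro x l; rw [hX_def]; simp [vecMulVec_apply]
  have hYapp : ∀ k y, Y k y = s k * e y + t k * w y := by
    intro k y; rw [hY_def]; simp [vecMulVec_apply]
  -- the combined matrix
  set M0 : Matrix (Fin (n+1) ⊕ Fin 2) (Fin (n+1) ⊕ Fin 2) ℝ := fromBlocks B X Y D with hM0_def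
  have hM0 : M0 * M0ᵀ = 1 := by
    rw [hM0_def, fromBlocks_transpose, fromBlocks_multiply, eq1, eq2, eq3, eq4, fromBlocks_one]
  have hM0diag : ∀ x, M0 x x = 0 := by
    rintro (x | k)
    · rw [hM0_def]
      simp only [fromBlocks_apply₁₁]
      rw [hBapp, heval]
      by_cases h0 : x = 0
      · subst h0
        rw [if_pos rfl, hq0, hw0]
        simp [hd 0]
      · rw [if_neg h0]
        simp [hd x]
    · rw [hM0_def]
      simp only [fromBlocks_apply₂₂]
      rw [hD_def]
      fin_cases k <;> simp
  have hM0off : ∀ x y, x ≠ y → M0 x y ≠ 0 := by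
    rintro (x | k) (y | l) hxy
    · -- B block
      have hxy' : x ≠ y := fun h => hxy (by rw [h])
      rw [hM0_def]
      simp only [fromBlocks_apply₁₁]
      rw [hBapp, heval, heval]
      by_cases h0 : x = 0
      · subst h0
        have hy0 : y ≠ 0 := fun h => hxy' h.symm
        rw [if_pos rfl, if_neg hy0, hq0]
        have h := ho 0 y hxy'
        rw [hw_def]
        simp only [one_mul, mul_zero, zero_mul, sub_zero, mul_zero]
        intro hc; apply h; linarith
      · by_cases hy0 : y = 0
        · subst hy0
          rw [if_neg h0, if_pos rfl, hw0]
          have h := ho x 0 hxy'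
          rw [hq_def]
          simp only [zero_mul, mul_zero, sub_zero, mul_one]
          intro hc; apply h; linarith
        · rw [if_neg h0, if_neg hy0]
          simp only [zero_mul, mul_zero, sub_zero]
          exact ho x y hxy'
    · -- X block
      rw [hM0_def]
      simp only [fromBlocks_apply₁₂]
      rw [hXapp, heval]
      by_cases h0 : x = 0
      · subst h0
        rw [if_pos rfl, hq0, hp_def]
        fin_cases l <;> simp <;> norm_num
      · rw [if_neg h0, hq_def]
        simp only [zero_mul, zero_add]
        refine mul_ne_zero (ho x 0 h0) ?_
        rw [hr_def]
        fin_cases l <;> norm_num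
    · -- Y block
      rw [hM0_def]
      simp only [fromBlocks_apply₂₁]
      rw [hYapp, heval]
      by_cases hy0 : y = 0
      · subst hy0
        rw [if_pos rfl, hw0, hs_def]
        fin_cases k <;> simp <;> norm_num
      · rw [if_neg hy0, hw_def]
        simp only [mul_zero, zero_add]
        refine mul_ne_zero ?_ (ho 0 y fun h => hy0 h.symm)
        rw [ht_def]
        fin_cases k <;> norm_num
    · -- D block
      have hkl : k ≠ l := fun h => hxy (by rw [h])
      rw [hM0_def]
      simp only [fromBlocks_apply₂₂]
      rw [hD_def]
      fin_cases k <;> fin_cases l <;>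
        first
          | exact absurd rfl hkl
          | norm_num
  -- transport to `Fin (n+3)`
  refine ⟨M0.submatrix (⇑(finSumFinEquiv (m := n+1) (n := 2)).symm)
    (⇑(finSumFinEquiv (m := n+1) (n := 2)).symm), ?_, ?_, ?_⟩
  · rw [transpose_submatrix, submatrix_mul_equiv, hM0, submatrix_one_equiv]
  · intro i
    rw [submatrix_apply]
    exact hM0diag _
  · intro i j hij
    rw [submatrix_apply]
    exact hM0off _ _ fun h => hij ((finSumFinEquiv (m := n+1) (n := 2)).symm.injective h)

/-! ### Base cases -/

lemma omzd_base0 : NOMZD (0 : Matrix (Fin 0) (Fin 0) ℝ) :=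
  ⟨Subsingleton.elim _ _, fun i => i.elim0, fun i => i.elim0⟩

lemma omzd_base2 : NOMZD (!![0, 1; 1, 0] : Matrix (Fin 2) (Fin 2) ℝ) := by
  refine ⟨?_, ?_, ?_⟩
  · ext i j
    fin_cases i <;> fin_cases j <;>
      simp [Matrix.mul_apply, Matrix.transpose, Fin.sum_univ_two, Matrix.one_apply]
  · intro i; fin_cases i <;> simp
  · intro i j hij
    fin_cases i <;> fin_cases j <;>
      first
        | exact absurd rfl hij
        | norm_num

noncomputable def omzdC5 : Matrix (Fin 5) (Fin 5) ℝ :=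
  let u : ℝ := (Real.sqrt 5 - 1)/2
  let v : ℝ := (Real.sqrt 5 + 1)/2
  !![0, 1, u, v, -1;
     -1, 0, 1, u, v;
     v, -1, 0, 1, u;
     u, v, -1, 0, 1;
     1, u, v, -1, 0]

set_option maxHeartbeats 1000000 in
lemma omzd_base5 : NOMZD ((Real.sqrt 5)⁻¹ • omzdC5) := by
  have hs5 : Real.sqrt 5 ^ 2 = 5 := Real.sq_sqrt (by norm_num)
  have hpos : 0 < Real.sqrt 5 := Real.sqrt_pos.mpr (by norm_num)
  have hgt : 1 < Real.sqrt 5 := by nlinarith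
  have hne : (Real.sqrt 5)⁻¹ ≠ 0 := inv_ne_zero (ne_of_gt hpos)
  have hCC : omzdC5 * omzdC5ᵀ = (5 : ℝ) • 1 := by
    ext i j
    fin_cases i <;> fin_cases j <;>
      simp [omzdC5, Matrix.mul_apply, Matrix.transpose, Fin.sum_univ_five, Matrix.one_apply, Matrix.smul_apply, smul_eq_mul] <;>
      first
        | linear_combination hs5 / 4
        | linear_combination (-1 : ℝ)/4 * hs5
        | linear_combination hs5 / 2
        | ring
  refine ⟨?_, ?_, ?_⟩
  · rw [transpose_smul, Matrix.smul_mul, Matrix.mul_smul, hCC, smul_smul, smul_smul]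
    rw [show (Real.sqrt 5)⁻¹ * (Real.sqrt 5)⁻¹ * 5 = 1 by
      rw [← mul_inv]
      rw [show Real.sqrt 5 * Real.sqrt 5 = 5 by nlinarith]
      norm_num]
    rw [one_smul]
  · intro i
    fin_cases i <;> simp [omzdC5]
  · intro i j hij
    fin_cases i <;> fin_cases j <;>
      simp only [Matrix.smul_apply, smul_eq_mul] <;>
      first
        | exact absurd rfl hij
        | (apply mul_ne_zero hne; norm_num [omzdC5]; try (intro h; linarith))

/-! ### Putting it together -/

lemma omzd_norm_exists (n : ℕ) (h1 : n ≠ 1) (h3 : n ≠ 3) :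
    ∃ A : Matrix (Fin n) (Fin n) ℝ, NOMZD A := by
  induction n using Nat.strong_induction_on with
  | _ n ih =>
    rcases Nat.lt_or_ge n 6 with h | h
    · interval_cases n
      · exact ⟨0, omzd_base0⟩
      · exact absurd rfl h1
      · exact ⟨_, omzd_base2⟩
      · exact absurd rfl h3
      · obtain ⟨A, hA⟩ := ih 2 (by omega) (by omega) (by omega)
        exact omzd_step (n := 1) A hA
      · exact ⟨_, omzd_base5⟩
    · obtain ⟨m, rfl⟩ : ∃ m, n = m + 6 := ⟨n - 6, by omega⟩
      obtain ⟨A, hA⟩ := ih (m + 4) (by omega) (by omega) (by omega)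
      exact omzd_step (n := m + 3) A hA

theorem omzd_exists (n : ℕ) (h1 : n ≠ 1) (h3 : n ≠ 3) :
    ∃ A : Matrix (Fin n) (Fin n) ℝ, IsOMZD A := by
  obtain ⟨A, hA, hd, ho⟩ := omzd_norm_exists n h1 h3
  exact ⟨A, ⟨1, one_pos, by rw [hA, one_smul]⟩, hd, ho⟩
end

section
/- There is no symmetric OMZD(4): no symmetric 4×4 real matrix with zero diagonal, all off-diagonal entries nonzero, satisfying A·Aᵀ = cI for some positive real c. -/
open Matrix

theorem no_symmetric_OMZD_four :
    ¬ ∃ A : Matrix (Fin 4) (Fin 4) ℝ, Aᵀ = A ∧ IsOMZD A := by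
  rintro ⟨A, hsym, ⟨c, hc, hA⟩, hdiag, hoff⟩
  rw [hsym] at hA
  have s21 : A 2 1 = A 1 2 := (congrFun (congrFun hsym 1) 2)
  have s31 : A 3 1 = A 1 3 := (congrFun (congrFun hsym 1) 3)
  have s32 : A 3 2 = A 2 3 := (congrFun (congrFun hsym 2) 3)
  have s20 : A 2 0 = A 0 2 := (congrFun (congrFun hsym 0) 2)
  have s30 : A 3 0 = A 0 3 := (congrFun (congrFun hsym 0) 3)
  have h02 := congrFun (congrFun hA 0) 2
  have h03 := congrFun (congrFun hA 0) 3
  have h23 := congrFun (congrFun hA 2) 3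
  simp [Matrix.mul_apply, Fin.sum_univ_four, Matrix.one_apply, hdiag,
    s21, s31, s32, s20, s30] at h02 h03 h23
  -- h02 : A 0 1 * A 1 2 + A 0 3 * A 2 3 = 0
  -- h03 : A 0 1 * A 1 3 + A 0 2 * A 2 3 = 0
  -- h23 : A 0 2 * A 0 3 + A 1 2 * A 1 3 = 0
  have key : (A 1 2 * A 1 3) * ((A 0 1) ^ 2 + (A 2 3) ^ 2) = 0 := by
    linear_combination (A 0 1 * A 1 3) * h02 - (A 0 3 * A 2 3) * h03 +
      (A 2 3) ^ 2 * h23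
  have hef : A 1 2 * A 1 3 ≠ 0 :=
    mul_ne_zero (hoff 1 2 (by decide)) (hoff 1 3 (by decide))
  have hsum : (A 0 1) ^ 2 + (A 2 3) ^ 2 = 0 := by
    rcases mul_eq_zero.mp key with h | h
    · exact absurd h hef
    · exact h
  have ha2 : (A 0 1) ^ 2 = 0 := by nlinarith [sq_nonneg (A 2 3)]
  exact hoff 0 1 (by decide) (pow_eq_zero_iff two_ne_zero |>.mp ha2)
end

section
/- If n is odd, there is no symmetric OMZD(n): any symmetric orthogonal real matrix (with A·Aᵀ = cI, c > 0) with zero trace has its eigenvalues ±√c occurring with equal multiplicity, which is impossible in odd dimension. -/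
open Matrix

/-!
If `A` is symmetric with `A * Aᵀ = c • 1`, then `A * A = s² • 1` with `s = √c`, so
`P = (A + s • 1) / (2s)` is idempotent. The trace of an idempotent matrix is its rank, an
integer, while `trace P = (trace A + n s) / (2s) = n / 2` because `A` has zero diagonal.
Hence `n` is even.
-/

namespace Matrix

variable {ι K : Type*} [Fintype ι] [DecidableEq ι] [Field K]

theorem trace_eq_rank_of_isIdempotentElem {P : Matrix ι ι K} (hP : IsIdempotentElem P) :
    P.trace = P.rank := by
  rw [← trace_toLin'_eq]
  exact (LinearMap.IsIdempotentElem.isProj_range _ (hP.map toLinAlgEquiv')).trace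

theorem isIdempotentElem_of_mul_self_eq_smul_one [NeZero (2 : K)] {A : Matrix ι ι K} {s : K}
    (hs : s ≠ 0) (hA : A * A = (s * s) • 1) :
    IsIdempotentElem ((2 * s)⁻¹ • (A + s • 1)) := by
  have hsq : (A + s • 1) * (A + s • 1) = (2 * s) • (A + s • 1) := by
    simp only [add_mul, mul_add, Matrix.smul_mul, Matrix.mul_smul, hA, Matrix.one_mul,
      Matrix.mul_one]
    module
  have h2 : (2 : K) ≠ 0 := NeZero.ne 2
  rw [IsIdempotentElem, smul_mul_smul, hsq, smul_smul]
  congr 1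
  field_simp

theorem even_card_of_mul_self_eq_smul_one_of_trace_eq_zero [CharZero K] {A : Matrix ι ι K}
    {s : K} (hs : s ≠ 0) (hA : A * A = (s * s) • 1) (htr : A.trace = 0) :
    Even (Fintype.card ι) := by
  set P := (2 * s)⁻¹ • (A + s • 1)
  have hcard : (Fintype.card ι : K) = 2 * P.rank := by
    rw [← trace_eq_rank_of_isIdempotentElem (isIdempotentElem_of_mul_self_eq_smul_one hs hA),
      trace_smul, trace_add, trace_smul, trace_one, htr, zero_add, smul_eq_mul, smul_eq_mul]
    field_simp
  exact ⟨P.rank, by rw [← two_mul]; exact_mod_cast hcard⟩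

end Matrix

theorem no_symmetric_OMZD_odd (n : ℕ) (hn : Odd n) :
    ¬ ∃ A : Matrix (Fin n) (Fin n) ℝ, Aᵀ = A ∧ IsOMZD A := by
  rintro ⟨A, hsymm, ⟨c, hc, hAAt⟩, hdiag, -⟩
  have hA : A * A = (√c * √c) • 1 := by
    rwa [hsymm, ← Real.mul_self_sqrt hc.le] at hAAt
  have htr : A.trace = 0 := Finset.sum_eq_zero fun i _ => hdiag i
  have heven := even_card_of_mul_self_eq_smul_one_of_trace_eq_zero
    (Real.sqrt_pos.mpr hc).ne' hA htr
  rw [Fintype.card_fin] at heven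
  exact Nat.not_even_iff_odd.mpr hn heven
end

section
/- For every m ≥ 3, let A = J - I (m×m, where J is the all-ones matrix), α = √(m²−1), β = (−√(m²−1)+√(2m−1))/m, and B = αI + βJ. Then the 2m×2m block matrix M = [[A, B],[B, −A]] is a symmetric OMZD(2m): M is symmetric, M·Mᵀ = m²·I, M has zero diagonal and all off-diagonal entries nonzero. -/
open Matrix

theorem symmetric_omzd_even (m : ℕ) (hm : 3 ≤ m) :
    let J : Matrix (Fin m) (Fin m) ℝ := Matrix.of fun _ _ => 1
    let A : Matrix (Fin m) (Fin m) ℝ := J - 1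
    let α : ℝ := Real.sqrt ((m : ℝ) ^ 2 - 1)
    let β : ℝ := (-Real.sqrt ((m : ℝ) ^ 2 - 1) + Real.sqrt (2 * (m : ℝ) - 1)) / m
    let B : Matrix (Fin m) (Fin m) ℝ := α • (1 : Matrix (Fin m) (Fin m) ℝ) + β • J
    let M : Matrix (Fin m ⊕ Fin m) (Fin m ⊕ Fin m) ℝ := Matrix.fromBlocks A B B (-A)
    Mᵀ = M ∧ M * Mᵀ = ((m : ℝ) ^ 2) • (1 : Matrix (Fin m ⊕ Fin m) (Fin m ⊕ Fin m) ℝ) ∧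
      (∀ i, M i i = 0) ∧ (∀ i j, i ≠ j → M i j ≠ 0) := by
  intro J A α β B M
  have hm3 : (3 : ℝ) ≤ (m : ℝ) := by exact_mod_cast hm
  have hm0 : (m : ℝ) ≠ 0 := by positivity
  have hα2 : α ^ 2 = (m : ℝ) ^ 2 - 1 := Real.sq_sqrt (by nlinarith)
  set γ : ℝ := Real.sqrt (2 * (m : ℝ) - 1) with hγdef
  have hγ2 : γ ^ 2 = 2 * (m : ℝ) - 1 := Real.sq_sqrt (by nlinarith)
  have hαpos : 0 < α := Real.sqrt_pos.2 (by nlinarith)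
  have hγpos : 0 < γ := Real.sqrt_pos.2 (by nlinarith)
  have hγα : γ < α := by
    apply Real.sqrt_lt_sqrt (by nlinarith)
    nlinarith
  have hβ : β = (γ - α) / m := by simp [β, hγdef]; ring
  -- symmetry of pieces
  have hJT : Jᵀ = J := by ext i j; simp [J]
  have hAT : Aᵀ = A := by simp [A, Matrix.transpose_sub, hJT]
  have hBT : Bᵀ = B := by simp [B, Matrix.transpose_add, Matrix.transpose_smul, hJT]
  have hMT : Mᵀ = M := by
    simp [M, Matrix.fromBlocks_transpose, hAT, hBT]
  refine ⟨hMT, ?_, ?_, ?_⟩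
  · -- product
    have hJJ : J * J = (m : ℝ) • J := by
      ext i j
      simp [Matrix.mul_apply, J, Matrix.smul_apply]
    have hA2 : A * A = ((m : ℝ) - 2) • J + 1 := by
      simp only [A, sub_mul, mul_sub, Matrix.one_mul, Matrix.mul_one, hJJ]
      ext i j
      simp [Matrix.sub_apply, Matrix.add_apply, Matrix.smul_apply]
      ring
    have hB2 : B * B = (α ^ 2) • (1 : Matrix (Fin m) (Fin m) ℝ)
        + (2 * α * β + (m : ℝ) * β ^ 2) • J := by
      simp only [B, add_mul, mul_add, Matrix.smul_mul, Matrix.mul_smul,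
        Matrix.one_mul, Matrix.mul_one, hJJ, smul_smul]
      ext i j
      simp [Matrix.add_apply, Matrix.smul_apply]
      ring
    have hAB : A * B = B * A := by
      simp only [A, B, add_mul, mul_add, sub_mul, mul_sub, Matrix.smul_mul,
        Matrix.mul_smul, Matrix.one_mul, Matrix.mul_one, hJJ]
      module
    have hkey : 2 * α * ((γ - α)/m) + (m : ℝ) * ((γ - α)/m) ^ 2 = (γ^2 - α^2)/m := by
      field_simp
      ring
    have hcoef : (m : ℝ) - 2 + (2 * α * β + (m : ℝ) * β ^ 2) = 0 := by
      rw [hβ, hkey, hγ2, hα2]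
      field_simp
      ring
    have hdiag : A * A + B * B = ((m : ℝ) ^ 2) • (1 : Matrix (Fin m) (Fin m) ℝ) := by
      rw [hA2, hB2]
      have hc : (2 * α * β + (m : ℝ) * β ^ 2) = -((m : ℝ) - 2) := by linarith
      rw [hc, hα2]
      module
    rw [hMT]
    show Matrix.fromBlocks A B B (-A) * Matrix.fromBlocks A B B (-A) = _
    rw [Matrix.fromBlocks_multiply]
    have hoff : A * B + B * (-A) = 0 := by rw [Matrix.mul_neg, hAB, add_neg_cancel]
    have hoff' : B * A + (-A) * B = 0 := by rw [Matrix.neg_mul, ← hAB, add_neg_cancel]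
    have hdiag' : B * B + (-A) * (-A) = ((m : ℝ) ^ 2) • (1 : Matrix (Fin m) (Fin m) ℝ) := by
      rw [Matrix.neg_mul, Matrix.mul_neg, neg_neg, add_comm]; exact hdiag
    rw [hdiag, hoff, hoff', hdiag']
    rw [show (0 : Matrix (Fin m) (Fin m) ℝ) = ((m:ℝ)^2) • (0 : Matrix (Fin m) (Fin m) ℝ) by simp,
      ← Matrix.fromBlocks_smul, Matrix.fromBlocks_one]
  · -- zero diagonal
    rintro (i | i) <;> simp [M, A, J, Matrix.sub_apply, Matrix.one_apply]
  · -- off-diagonal nonzero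
    have hβne : β ≠ 0 := by
      rw [hβ]
      intro h
      have := div_eq_zero_iff.mp h
      rcases this with h | h
      · linarith
      · exact hm0 h
    have hmpos : (0:ℝ) < m := by linarith
    have hαβ : α + β ≠ 0 := by
      rw [hβ]
      have h1 : 0 < ((m:ℝ) - 1) * α + γ := by nlinarith
      have : α + (γ - α) / m = (((m:ℝ) - 1) * α + γ) / m := by field_simp; ring
      rw [this]
      positivity
    rintro (i | i) (j | j) hij
    · have : i ≠ j := fun h => hij (by rw [h])
      simp [M, A, J, Matrix.sub_apply, Matrix.one_apply, this]
    · by_cases h : i = j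
      · subst h
        simp [M, B, J, Matrix.add_apply, Matrix.smul_apply, Matrix.one_apply]
        simpa [β] using hαβ
      · simp [M, B, J, Matrix.add_apply, Matrix.smul_apply, Matrix.one_apply, h]
        simpa [β] using hβne
    · by_cases h : i = j
      · subst h
        simp [M, B, J, Matrix.add_apply, Matrix.smul_apply, Matrix.one_apply]
        simpa [β] using hαβ
      · simp [M, B, J, Matrix.add_apply, Matrix.smul_apply, Matrix.one_apply, h]
        simpa [β] using hβne
    · have : i ≠ j := fun h => hij (by rw [h])
      simp [M, A, J, Matrix.sub_apply, Matrix.one_apply, this]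
end

section
/- There is no OMPZD(3,2): no 3×3 real orthogonal matrix (A·Aᵀ = cI, c > 0) with exactly two zero entries, both on the main diagonal. -/
open Matrix

/-- An OMPZD(n,k): an `n × n` real matrix with `A * Aᵀ = c • I` for some `c > 0`,
having exactly `k` zero entries, all of which lie on the main diagonal. -/
def IsOMPZD (n k : ℕ) (A : Matrix (Fin n) (Fin n) ℝ) : Prop :=
  (∃ c : ℝ, 0 < c ∧ A * Aᵀ = c • (1 : Matrix (Fin n) (Fin n) ℝ)) ∧
  ∃ s : Finset (Fin n), s.card = k ∧ ∀ i j, A i j = 0 ↔ (i = j ∧ i ∈ s)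

theorem no_OMPZD_three_two : ¬ ∃ A : Matrix (Fin 3) (Fin 3) ℝ, IsOMPZD 3 2 A := by
  rintro ⟨A, ⟨c, hc, horth⟩, s, hcard, hz⟩
  obtain ⟨i, j, hij, rfl⟩ := Finset.card_eq_two.mp hcard
  have hAi : A i i = 0 := (hz i i).mpr ⟨rfl, by simp⟩
  have hAj : A j j = 0 := (hz j j).mpr ⟨rfl, by simp⟩
  -- there is a third index k
  obtain ⟨k, hk⟩ : (({i, j} : Finset (Fin 3))ᶜ).Nonempty := by
    rw [← Finset.card_pos, Finset.card_compl, hcard]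
    simp
  rw [Finset.mem_compl, Finset.mem_insert, Finset.mem_singleton] at hk
  push_neg at hk
  obtain ⟨hki, hkj⟩ := hk
  -- the off-diagonal entries in columns k of rows i and j are nonzero
  have hik : A i k ≠ 0 := fun h => hki.symm ((hz i k).mp h).1
  have hjk : A j k ≠ 0 := fun h => hkj.symm ((hz j k).mp h).1
  -- orthogonality of rows i and j
  have hod : (A * Aᵀ) i j = 0 := by
    rw [horth]; simp [Matrix.one_apply, hij]
  rw [Matrix.mul_apply] at hod
  have huniv : (Finset.univ : Finset (Fin 3)) = {i, j, k} := by
    symm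
    apply Finset.eq_univ_of_card
    rw [Finset.card_insert_of_notMem (by simp [hij, Ne.symm hki]),
      Finset.card_insert_of_notMem (by simp [Ne.symm hkj]),
      Finset.card_singleton]
    simp
  rw [huniv, Finset.sum_insert (by simp [hij, Ne.symm hki]),
    Finset.sum_insert (by simp [Ne.symm hkj]), Finset.sum_singleton,
    Matrix.transpose_apply, Matrix.transpose_apply, Matrix.transpose_apply,
    hAi, hAj, mul_zero, zero_mul, zero_add, zero_add] at hod
  rcases mul_eq_zero.mp hod with h | h
  · exact hik h
  · exact hjk h
end

section
/- Let α = (−1+√5)/2 and β = (−1−√5)/2. The 4×4 matrix with rows [1,1,1,1], [1,0,α,β], [1,β,0,α], [1,α,β,0] is an OMPZD(4,3): it satisfies A·Aᵀ = cI for some c > 0, and its zero entries are exactly the three diagonal positions (2,2), (3,3), (4,4). -/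
open Matrix

theorem ompzd_four_three :
    let α : ℝ := (-1 + Real.sqrt 5) / 2
    let β : ℝ := (-1 - Real.sqrt 5) / 2
    let A : Matrix (Fin 4) (Fin 4) ℝ :=
      !![1, 1, 1, 1;
         1, 0, α, β;
         1, β, 0, α;
         1, α, β, 0]
    (∃ c : ℝ, 0 < c ∧ A * Aᵀ = c • (1 : Matrix (Fin 4) (Fin 4) ℝ)) ∧
      ∀ i j, A i j = 0 ↔ (i = j ∧ i ≠ 0) := by
  intro α β A
  have h5 : Real.sqrt 5 * Real.sqrt 5 = 5 := Real.mul_self_sqrt (by norm_num)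
  have h2 : (2 : ℝ) < Real.sqrt 5 := by
    nlinarith [Real.sqrt_nonneg 5]
  constructor
  · refine ⟨4, by norm_num, ?_⟩
    ext i j
    fin_cases i <;> fin_cases j <;>
      simp [A, α, β, Matrix.mul_apply, Fin.sum_univ_four, Matrix.one_apply, Matrix.vecHead, Matrix.vecTail] <;>
      nlinarith
  · intro i j
    fin_cases i <;> fin_cases j <;>
      simp [A, α, β, Matrix.vecHead, Matrix.vecTail] <;> intro h <;> nlinarith
end

section
/- If A is a symmetric m×m real matrix with A·Aᵀ = cI (c > 0), zero diagonal, and all off-diagonal entries nonzero, and B is a symmetric n×n real matrix with B·Bᵀ = dI (d > 0) and all entries nonzero, then the Kronecker product A ⊗ B is symmetric, satisfies (A⊗B)·(A⊗B)ᵀ = cd·I, and its (i,j) block is zero exactly when the corresponding entry of A is zero; in particular A ⊗ B has exactly two distinct eigenvalues, namely ±√(cd). -/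
open Matrix Kronecker

theorem kronecker_symmetric_orthogonal (m n : ℕ) (hm : 0 < m) (hn : 0 < n)
    (A : Matrix (Fin m) (Fin m) ℝ) (B : Matrix (Fin n) (Fin n) ℝ)
    (hAsymm : Aᵀ = A) (c : ℝ) (hc : 0 < c)
    (hAorth : A * Aᵀ = c • (1 : Matrix (Fin m) (Fin m) ℝ))
    (hAdiag : ∀ i, A i i = 0) (hAoff : ∀ i j, i ≠ j → A i j ≠ 0)
    (hBsymm : Bᵀ = B) (d : ℝ) (hd : 0 < d)
    (hBorth : B * Bᵀ = d • (1 : Matrix (Fin n) (Fin n) ℝ))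
    (hB : ∀ k l, B k l ≠ 0) :
    (A ⊗ₖ B)ᵀ = A ⊗ₖ B ∧
    (A ⊗ₖ B) * (A ⊗ₖ B)ᵀ = (c * d) • (1 : Matrix (Fin m × Fin n) (Fin m × Fin n) ℝ) ∧
    (∀ i j, (∀ k l, (A ⊗ₖ B) (i, k) (j, l) = 0) ↔ A i j = 0) ∧
    {μ : ℝ | ∃ v : Fin m × Fin n → ℝ, v ≠ 0 ∧ (A ⊗ₖ B).mulVec v = μ • v}
      = {Real.sqrt (c * d), -Real.sqrt (c * d)} := by
  have hMsymm : (A ⊗ₖ B)ᵀ = A ⊗ₖ B := by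
    rw [← Matrix.kroneckerMap_transpose, hAsymm, hBsymm]
  have hA2 : A * A = c • 1 := by rw [← hAorth, hAsymm]
  have hB2 : B * B = d • 1 := by rw [← hBorth, hBsymm]
  have hM2 : (A ⊗ₖ B) * (A ⊗ₖ B) = (c * d) • 1 := by
    rw [← Matrix.mul_kronecker_mul, hA2, hB2, Matrix.smul_kronecker,
      Matrix.kronecker_smul, Matrix.one_kronecker_one, smul_smul]
  refine ⟨hMsymm, by rw [hMsymm]; exact hM2, ?_, ?_⟩
  · intro i j
    constructor
    · intro h
      have := h ⟨0, hn⟩ ⟨0, hn⟩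
      simp only [Matrix.kroneckerMap_apply, mul_eq_zero] at this
      rcases this with h' | h'
      · exact h'
      · exact absurd h' (hB _ _)
    · intro h k l
      simp [Matrix.kroneckerMap_apply, h]
  · set s := Real.sqrt (c * d) with hs
    have hcd : 0 < c * d := mul_pos hc hd
    have hs2 : s * s = c * d := Real.mul_self_sqrt hcd.le
    have hspos : 0 < s := Real.sqrt_pos.mpr hcd
    have hMv2 : ∀ v : Fin m × Fin n → ℝ,
        (A ⊗ₖ B).mulVec ((A ⊗ₖ B).mulVec v) = (c * d) • v := by
      intro v
      rw [Matrix.mulVec_mulVec, hM2, Matrix.smul_mulVec, Matrix.one_mulVec]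
    have hdiag : ∀ p : Fin m × Fin n, (A ⊗ₖ B) p p = 0 := by
      intro p
      simp [Matrix.kroneckerMap_apply, hAdiag p.1]
    set p0 : Fin m × Fin n := (⟨0, hm⟩, ⟨0, hn⟩) with hp0
    set e : Fin m × Fin n → ℝ := Pi.single p0 1 with he
    ext μ
    simp only [Set.mem_setOf_eq, Set.mem_insert_iff, Set.mem_singleton_iff]
    constructor
    · rintro ⟨v, hv, hmv⟩
      have h2 : (μ * μ) • v = (c * d) • v := by
        have := hMv2 v
        rw [hmv, Matrix.mulVec_smul, hmv, smul_smul] at this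
        exact this
      obtain ⟨p, hp⟩ := Function.ne_iff.mp hv
      have : (μ * μ) * v p = (c * d) * v p := congrFun h2 p
      have hμ2 : μ * μ = c * d := mul_right_cancel₀ hp this
      have : (μ - s) * (μ + s) = 0 := by ring_nf; nlinarith [hμ2, hs2]
      rcases mul_eq_zero.mp this with h' | h'
      · left; linarith
      · right; linarith
    · rintro (h | h) <;> subst h
      · refine ⟨(A ⊗ₖ B).mulVec e + s • e, ?_, ?_⟩
        · intro h0
          have := congrFun h0 p0
          simp [he, hAdiag] at this
          linarith
        · rw [Matrix.mulVec_add, hMv2, Matrix.mulVec_smul, smul_add, smul_smul, hs2]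
          abel
      · refine ⟨(A ⊗ₖ B).mulVec e - s • e, ?_, ?_⟩
        · intro h0
          have := congrFun h0 p0
          simp [he, hAdiag] at this
          linarith
        · rw [Matrix.mulVec_sub, hMv2, Matrix.mulVec_smul, smul_sub, smul_smul]
          simp only [neg_mul, hs2, neg_smul, sub_neg_eq_add]
          abel
end
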